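/- Let L be the Laplacian of a connected undirected graph on the vertex set N partitioned into nonempty N_ac and N_dc. Suppose μ* ∈ ℝ^N and ω* ∈ ℝ satisfy (Lμ*)_i + D_i ω* = 0 for all i ∈ N_ac with constants D_i > 0, and (Lμ*)_i = 0 for all i ∈ N_dc. Then ω* = 0 and μ* is a constant vector (all components equal). -/

import Mathlib

open Matrix

/-!
The Laplacian is symmetric with zero row sums, so the entries of `L μ` sum to zero. Summing the
equilibrium equations therefore gives `(∑_{i ∈ ac} Dᵢ) ω = 0`, and the sum is positive,
so `ω = 0`.
Then `L μ = 0`, and on a connected graph the kernel of `L` consists of the constant vectors.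
-/

theorem SimpleGraph.sum_lapMatrix_mulVec {V R : Type*} [Fintype V] [DecidableEq V] [CommRing R]
    (G : SimpleGraph V) [DecidableRel G.Adj] (x : V → R) :
    ∑ i, (G.lapMatrix R *ᵥ x) i = 0 := by
  have h := dotProduct_mulVec (fun _ ↦ (1 : R)) (G.lapMatrix R) x
  rw [← mulVec_transpose, (G.isSymm_lapMatrix R).eq, G.lapMatrix_mulVec_const_eq_zero,
    zero_dotProduct] at h
  simpa [dotProduct] using h

theorem sum_eq_neg_sum_filter_mul_of_add_mul_eq_zero {V R : Type*} [Fintype V] [CommRing R]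
    {s : Set V} [DecidablePred (· ∈ s)] {v D : V → R} {ω : R}
    (hs : ∀ i ∈ s, v i + D i * ω = 0) (hnot : ∀ i ∉ s, v i = 0) :
    ∑ i, v i = -((∑ i with i ∈ s, D i) * ω) := by
  rw [Finset.sum_mul, ← Finset.sum_neg_distrib, Finset.sum_filter]
  refine Finset.sum_congr rfl fun i _ ↦ ?_
  split_ifs with hi
  · exact eq_neg_of_add_eq_zero_left (hs i hi)
  · exact hnot i hi

theorem eq_zero_of_sum_eq_zero_of_add_mul_eq_zero {V R : Type*} [Fintype V] [CommRing R]
    [LinearOrder R] [IsStrictOrderedRing R] {s : Set V} [DecidablePred (· ∈ s)]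
    (hs_ne : s.Nonempty) {v D : V → R} (hD : ∀ i ∈ s, 0 < D i) {ω : R} (hv : ∑ i, v i = 0)
    (hs : ∀ i ∈ s, v i + D i * ω = 0) (hnot : ∀ i ∉ s, v i = 0) : ω = 0 := by
  have hDsum : 0 < ∑ i with i ∈ s, D i := by
    obtain ⟨i, hi⟩ := hs_ne
    exact Finset.sum_pos (fun j hj ↦ hD j (Finset.mem_filter.mp hj).2) ⟨i, by simpa using hi⟩
  rw [sum_eq_neg_sum_filter_mul_of_add_mul_eq_zero hs hnot, neg_eq_zero] at hv
  exact (mul_eq_zero.mp hv).resolve_left hDsum.ne'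

/-- Equilibrium of the real-time algorithm: if `(Lμ*)ᵢ + Dᵢω* = 0` on the AC
buses and `(Lμ*)ᵢ = 0` on the DC buses, with `L` the Laplacian of a connected
graph and `Dᵢ > 0`, then `ω* = 0` and `μ*` is constant. -/
theorem equilibrium_omega_zero_mu_const
    {V : Type*} [Fintype V] [DecidableEq V]
    (G : SimpleGraph V) [DecidableRel G.Adj] (hG : G.Connected)
    (ac : Set V) [DecidablePred (· ∈ ac)] (hac : ac.Nonempty)
    (D : V → ℝ) (hD : ∀ i ∈ ac, 0 < D i)
    (μ : V → ℝ) (ω : ℝ)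
    (hAC : ∀ i ∈ ac, ((G.lapMatrix ℝ) *ᵥ μ) i + D i * ω = 0)
    (hDC : ∀ i ∉ ac, ((G.lapMatrix ℝ) *ᵥ μ) i = 0) :
    ω = 0 ∧ ∀ i j, μ i = μ j := by
  have hω : ω = 0 :=
    eq_zero_of_sum_eq_zero_of_add_mul_eq_zero hac hD (G.sum_lapMatrix_mulVec μ) hAC hDC
  have hLμ : G.lapMatrix ℝ *ᵥ μ = 0 := by
    funext i
    by_cases hi : i ∈ ac
    · simpa [hω] using hAC i hi
    · exact hDC i hi
  exact ⟨hω, fun i j ↦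
    G.lapMatrix_mulVec_eq_zero_iff_forall_reachable.mp hLμ i j (hG.preconnected i j)⟩
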